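/- arXiv:1708.02036 — 3 statements merged into one kernel-verified Lean document; each statement's English description precedes it below -/
import Mathlib

section
/- Let P(λ) = Σ_{k=0}^{⌊(n−1)/2⌋} c_k λ^k/(n−2k−1)! and Q(λ) = (n−1)P(λ) − 2λP′(λ). If P′(λ̄) = 0 and Q(λ̄) = 0 and Q being proportional to the equation (n−2)Q(λ̄) − 2λ̄Q′(λ̄) = 0 holds, then P(λ̄) = 0 and P″(λ̄) = 0; i.e., λ̄ is at least a triple root of P. -/
open Polynomial

/-- If `P'(λ̄) = 0`, `Q(λ̄) = 0` and the field equation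
`(n-2) Q(λ̄) - 2 λ̄ Q'(λ̄) = 0` holds (with `λ̄ ≠ 0` real), then `P(λ̄) = 0` and
`P''(λ̄) = 0`, i.e. `λ̄` is at least a triple root of `P`. -/
theorem triple_root_of_degenerate (n : ℕ) (hn : 3 ≤ n) (c : ℕ → ℝ) (lam : ℝ)
    (hlam : lam ≠ 0)
    (P Q : Polynomial ℝ)
    (hP : P = ∑ k ∈ Finset.range ((n - 1) / 2 + 1),
      Polynomial.C (c k / (Nat.factorial (n - 2 * k - 1) : ℝ)) * Polynomial.X ^ k)
    (hQ : Q = Polynomial.C ((n : ℝ) - 1) * P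
      - Polynomial.C 2 * Polynomial.X * P.derivative)
    (hP' : P.derivative.eval lam = 0)
    (hQ0 : Q.eval lam = 0)
    (hfe : ((n : ℝ) - 2) * Q.eval lam - 2 * lam * Q.derivative.eval lam = 0) :
    P.eval lam = 0 ∧ P.derivative.derivative.eval lam = 0 := by
  have hn1 : (2:ℝ) ≤ (n:ℝ) := by exact_mod_cast hn.trans' (by norm_num)
  have hQev : Q.eval lam = ((n:ℝ) - 1) * P.eval lam - 2 * lam * P.derivative.eval lam := by
    simp [hQ]
  have hPlam : P.eval lam = 0 := by
    have h := hQ0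
    rw [hQev, hP'] at h
    have hne : (n:ℝ) - 1 ≠ 0 := by nlinarith
    have h2 : ((n:ℝ) - 1) * P.eval lam = 0 := by linarith
    rcases mul_eq_zero.mp h2 with h | h
    · exact absurd h hne
    · exact h
  have hQ' : Q.derivative.eval lam = -2 * lam * P.derivative.derivative.eval lam := by
    have : Q.derivative = Polynomial.C ((n:ℝ) - 1) * P.derivative
        - (Polynomial.C 2 * P.derivative
          + Polynomial.C 2 * Polynomial.X * P.derivative.derivative) := by
      rw [hQ]
      simp [derivative_mul]
    rw [this]
    simp [hP']
  rw [hQ0, hQ'] at hfe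
  have h4 : 4 * lam * lam * P.derivative.derivative.eval lam = 0 := by linarith
  have hl2 : lam * lam ≠ 0 := mul_ne_zero hlam hlam
  constructor
  · exact hPlam
  · have := mul_eq_zero.mp (by linarith : (4 * (lam * lam)) * P.derivative.derivative.eval lam = 0)
    rcases this with h | h
    · exfalso; rcases mul_eq_zero.mp h with h|h
      · norm_num at h
      · exact hl2 h
    · exact h
end

section
/- With P(λ) = Σ_{k=0}^{⌊(n−1)/2⌋} c_k λ^k/(n−2k−1)! and Q(λ) = (n−1)P(λ) − 2λP′(λ): if R^{ab}_{cd} = λ̄ δ^{ab}_{cd} (maximally symmetric algebraic curvature in n dimensions), then the Lovelock field tensor G^a_c = Σ_k c_k G^{a(k)}_c equals −((n−1)!/2)·P(λ̄)·δ^a_c. -/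
/-- Kronecker delta over an `n`-element index set. -/
noncomputable def kron {n : ℕ} (a b : Fin n) : ℝ := if a = b then 1 else 0

/-- Generalized Kronecker delta of order `p`:
`δ^{a_1…a_p}_{b_1…b_p} = det (δ^{a_i}_{b_j})`. -/
noncomputable def gdelta {n p : ℕ} (a b : Fin p → Fin n) : ℝ :=
  Matrix.det (Matrix.of fun i j => kron (a i) (b j))

lemma kron_comm {n : ℕ} (a b : Fin n) : kron a b = kron b a := by
  simp [kron, eq_comm]

lemma sum_kron_diag {n : ℕ} : ∑ x : Fin n, kron x x = (n : ℝ) := by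
  simp [kron]

lemma sum_kron_mul {n : ℕ} (t : Fin n) (F : Fin n → ℝ) :
    ∑ x : Fin n, kron x t * F x = F t := by
  simp only [kron, ite_mul, one_mul, zero_mul]
  rw [Finset.sum_ite_eq' Finset.univ t F]
  simp

lemma contract_one {n p : ℕ} (A B : Fin p → Fin n) :
    ∑ x : Fin n, gdelta (Fin.cons x A) (Fin.cons x B) = ((n:ℝ) - p) * gdelta A B := by
  cases p with
  | zero =>
      have h1 : ∀ x : Fin n, gdelta (Fin.cons x A) (Fin.cons x B) = kron x x := by
        intro x
        simp [gdelta, Matrix.det_fin_one]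
      have h2 : gdelta A B = 1 := by
        simp [gdelta, Matrix.det_fin_zero]
      simp [h1, h2, sum_kron_diag]
  | succ q =>
      set Bx : Fin n → Fin (q+2) → Fin n := fun x => Fin.cons x B with hBx
      have step1 : ∑ x : Fin n, gdelta (Fin.cons x A) (Fin.cons x B)
          = ∑ j : Fin (q+2), ∑ x : Fin n, (-1)^(j:ℕ) * kron x (Bx x j) *
              Matrix.det (Matrix.of fun i l => kron (A i) (Bx x (j.succAbove l))) := by
        rw [← Finset.sum_comm]
        refine Finset.sum_congr rfl fun x _ => ?_
        rw [gdelta, Matrix.det_succ_row_zero]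
        refine Finset.sum_congr rfl fun j _ => rfl
      rw [step1, Fin.sum_univ_succ]
      have hzero : ∑ x : Fin n, (-1)^(((0:Fin (q+2))):ℕ) * kron x (Bx x 0) *
          Matrix.det (Matrix.of fun i l => kron (A i) (Bx x ((0:Fin (q+2)).succAbove l)))
          = (n:ℝ) * gdelta A B := by
        have hdet : ∀ x : Fin n,
            Matrix.det (Matrix.of fun i l => kron (A i) (Bx x ((0:Fin (q+2)).succAbove l)))
              = gdelta A B := by
          intro x
          rw [gdelta]
          congr 1
        have h2 : ∀ x : Fin n, (-1:ℝ)^(((0:Fin (q+2))):ℕ) * kron x (Bx x 0) *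
            Matrix.det (Matrix.of fun i l => kron (A i) (Bx x ((0:Fin (q+2)).succAbove l)))
            = kron x x * gdelta A B := by
          intro x
          rw [hdet]
          simp [hBx]
        rw [Finset.sum_congr rfl fun x _ => h2 x, ← Finset.sum_mul, sum_kron_diag]
      have hsucc : ∀ j' : Fin (q+1), ∑ x : Fin n,
          (-1)^(((Fin.succ j'):Fin (q+2)):ℕ) * kron x (Bx x (Fin.succ j')) *
          Matrix.det (Matrix.of fun i l => kron (A i) (Bx x ((Fin.succ j').succAbove l)))
          = -gdelta A B := by
        intro j'
        have hcol : ∀ l : Fin (q+1),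
            Bx (B j') ((Fin.succ j').succAbove l) = B ((Fin.cycleRange j').symm l) := by
          intro l
          induction l using Fin.cases with
          | zero => simp [hBx]
          | succ l0 => simp [hBx, Fin.succ_succAbove_succ]
        have hG : Matrix.det (Matrix.of fun i l => kron (A i) (Bx (B j') ((Fin.succ j').succAbove l)))
            = (-1:ℝ)^(j':ℕ) * gdelta A B := by
          have : (Matrix.of fun (i : Fin (q+1)) l => kron (A i) (Bx (B j') ((Fin.succ j').succAbove l)))
              = (Matrix.of fun (i : Fin (q+1)) l => kron (A i) (B l)).submatrix id ((Fin.cycleRange j')⁻¹ : Equiv.Perm (Fin (q+1))) := by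
            ext i l
            simp [Matrix.submatrix_apply, hcol, Equiv.Perm.inv_def]
          rw [this, Matrix.det_permute', Equiv.Perm.sign_inv, Fin.sign_cycleRange]
          rw [gdelta]
          norm_num
        have hpull : ∀ x : Fin n, (-1:ℝ)^(((Fin.succ j'):Fin (q+2)):ℕ) * kron x (Bx x (Fin.succ j')) *
            Matrix.det (Matrix.of fun i l => kron (A i) (Bx x ((Fin.succ j').succAbove l)))
            = (-1:ℝ)^((j':ℕ)+1) * (kron x (B j') *
              Matrix.det (Matrix.of fun i l => kron (A i) (Bx x ((Fin.succ j').succAbove l)))) := by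
          intro x
          have h1 : Bx x (Fin.succ j') = B j' := by simp [hBx]
          rw [h1, Fin.val_succ, mul_assoc]
        rw [Finset.sum_congr rfl fun x _ => hpull x, ← Finset.mul_sum]
        have hsub : ∑ x : Fin n, kron x (B j') *
            Matrix.det (Matrix.of fun i l => kron (A i) (Bx x ((Fin.succ j').succAbove l)))
            = (-1:ℝ)^(j':ℕ) * gdelta A B := by
          rw [sum_kron_mul (B j') (fun y => Matrix.det (Matrix.of fun i l => kron (A i) (Bx y ((Fin.succ j').succAbove l))))]
          exact hG
        rw [hsub, ← mul_assoc, ← pow_add]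
        have : (-1:ℝ)^((j':ℕ)+1+(j':ℕ)) = -1 := Odd.neg_one_pow ⟨(j':ℕ), by ring⟩
        rw [this]
        ring
      rw [Finset.sum_congr rfl fun j' _ => hsucc j', hzero]
      simp only [Finset.sum_const, Finset.card_univ, Fintype.card_fin, nsmul_eq_mul]
      push_cast
      ring

lemma gdelta_rotate {n m : ℕ} (e f : Fin n) (v : Fin m → Fin n) :
    gdelta (Fin.cons e v) (Fin.cons f v) = gdelta (Fin.snoc v e) (Fin.snoc v f) := by
  have hfun : ∀ (a : Fin n) (i : Fin (m+1)),
      (Fin.cons a v : Fin (m+1) → Fin n) (finRotate (m+1) i)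
      = (Fin.snoc v a : Fin (m+1) → Fin n) i := by
    intro a i
    induction i using Fin.lastCases with
    | last => simp [finRotate_last]
    | cast i0 =>
        have h1 : finRotate (m+1) (Fin.castSucc i0) = Fin.succ i0 := by
          rw [finRotate_succ_apply, Fin.coeSucc_eq_succ]
        rw [h1]
        simp
  have key : (Matrix.of fun i j => kron ((Fin.cons e v : Fin (m+1) → Fin n) i)
        ((Fin.cons f v : Fin (m+1) → Fin n) j)).submatrix (finRotate (m+1)) (finRotate (m+1))
      = Matrix.of fun i j => kron ((Fin.snoc v e : Fin (m+1) → Fin n) i)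
        ((Fin.snoc v f : Fin (m+1) → Fin n) j) := by
    ext i j
    rw [Matrix.submatrix_apply, Matrix.of_apply, Matrix.of_apply, hfun e i, hfun f j]
  calc gdelta (Fin.cons e v) (Fin.cons f v)
      = Matrix.det ((Matrix.of fun i j => kron ((Fin.cons e v : Fin (m+1) → Fin n) i)
          ((Fin.cons f v : Fin (m+1) → Fin n) j)).submatrix (finRotate (m+1)) (finRotate (m+1))) :=
        (Matrix.det_submatrix_equiv_self _ _).symm
    _ = gdelta (Fin.snoc v e) (Fin.snoc v f) := by rw [key]; rfl

lemma sum_cons_decomp {n m : ℕ} (F : (Fin (m+1) → Fin n) → ℝ) :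
    ∑ w : Fin (m+1) → Fin n, F w = ∑ x : Fin n, ∑ w' : Fin m → Fin n, F (Fin.cons x w') := by
  calc ∑ w : Fin (m+1) → Fin n, F w
      = ∑ p : Fin n × (Fin m → Fin n), F (Fin.cons p.1 p.2) :=
        (Fintype.sum_equiv (Fin.consEquiv (fun _ => Fin n)) _ _ (fun p => rfl)).symm
    _ = ∑ x : Fin n, ∑ w' : Fin m → Fin n, F (Fin.cons x w') := by
        rw [Fintype.sum_prod_type]

lemma sum_diag_gdelta {n : ℕ} (e f : Fin n) (m : ℕ) :
    ∑ w : Fin m → Fin n, gdelta (Fin.cons e w) (Fin.cons f w)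
      = (∏ j ∈ Finset.range m, ((n:ℝ) - (j+1))) * kron e f := by
  induction m with
  | zero =>
      rw [Fintype.sum_unique]
      simp [gdelta, Matrix.det_fin_one, kron]
  | succ m ih =>
      calc ∑ w : Fin (m+1) → Fin n, gdelta (Fin.cons e w) (Fin.cons f w)
          = ∑ w : Fin (m+1) → Fin n, gdelta (Fin.snoc w e) (Fin.snoc w f) :=
            Finset.sum_congr rfl fun w _ => gdelta_rotate e f w
        _ = ∑ x : Fin n, ∑ w' : Fin m → Fin n,
              gdelta (Fin.snoc (Fin.cons x w') e) (Fin.snoc (Fin.cons x w') f) :=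
            sum_cons_decomp _
        _ = ∑ w' : Fin m → Fin n, ∑ x : Fin n,
              gdelta (Fin.cons x (Fin.snoc w' e)) (Fin.cons x (Fin.snoc w' f)) := by
            rw [Finset.sum_comm]
            refine Finset.sum_congr rfl fun w' _ => Finset.sum_congr rfl fun x _ => ?_
            rw [← Fin.cons_snoc_eq_snoc_cons, ← Fin.cons_snoc_eq_snoc_cons]
        _ = ∑ w' : Fin m → Fin n, ((n:ℝ) - (m+1)) * gdelta (Fin.snoc w' e) (Fin.snoc w' f) := by
            refine Finset.sum_congr rfl fun w' _ => ?_
            have := contract_one (Fin.snoc w' e) (Fin.snoc w' f)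
            rw [this]
            push_cast
            ring
        _ = ((n:ℝ) - (m+1)) * ∑ w' : Fin m → Fin n, gdelta (Fin.cons e w') (Fin.cons f w') := by
            rw [← Finset.mul_sum]
            congr 1
            exact Finset.sum_congr rfl fun w' _ => (gdelta_rotate e f w').symm
        _ = (∏ j ∈ Finset.range (m+1), ((n:ℝ) - (j+1))) * kron e f := by
            rw [ih, Finset.prod_range_succ]
            ring

lemma kron_eq_zero {n : ℕ} {a b : Fin n} (h : a ≠ b) : kron a b = 0 := if_neg h

lemma sum_fun_kron {n k : ℕ} (t : Fin k → Fin n) (F : (Fin k → Fin n) → ℝ) :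
    ∑ u : Fin k → Fin n, (∏ i : Fin k, kron (u i) (t i)) * F u = F t := by
  have h : ∀ u : Fin k → Fin n, (∏ i : Fin k, kron (u i) (t i)) = if u = t then 1 else 0 := by
    intro u
    by_cases hu : u = t
    · simp [hu, kron]
    · obtain ⟨i, hi⟩ := Function.ne_iff.mp hu
      rw [if_neg hu]
      exact Finset.prod_eq_zero (Finset.mem_univ i) (by exact kron_eq_zero hi)
  simp only [h, ite_mul, one_mul, zero_mul]
  rw [Finset.sum_ite_eq' Finset.univ t F]
  simp

lemma gdelta_colswap {n p : ℕ} (R : Fin p → Fin n) (C : Fin p → Fin n) (u v : Fin p)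
    (huv : u ≠ v) :
    gdelta R (C ∘ Equiv.swap u v) = -gdelta R C := by
  have hm : (Matrix.of fun i l => kron (R i) ((C ∘ Equiv.swap u v) l))
      = (Matrix.of fun i l => kron (R i) (C l)).submatrix id (Equiv.swap u v) := by
    ext i l
    simp [Matrix.submatrix_apply]
  rw [gdelta, hm, Matrix.det_permute', Equiv.Perm.sign_swap huv, gdelta]
  norm_num

lemma colswap {n k : ℕ} (R : Fin (k+k+1) → Fin n) (f : Fin n) (a b : Fin k → Fin n)
    (t : Finset (Fin k)) :
    gdelta R (Fin.cons f (Fin.append (fun i => if i ∈ t then b i else a i)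
        (fun i => if i ∈ t then a i else b i)))
      = (-1:ℝ)^t.card * gdelta R (Fin.cons f (Fin.append a b)) := by
  classical
  induction t using Finset.induction_on with
  | empty => simp
  | @insert j t0 hj ih =>
      have hjk : (j:ℕ) < k := j.isLt
      have hne : (Fin.succ (Fin.castAdd k j) : Fin (k+k+1)) ≠ Fin.succ (Fin.natAdd k j) := by
        apply Fin.ne_of_val_ne
        simp only [Fin.val_succ, Fin.coe_castAdd, Fin.coe_natAdd]
        omega
      have hcomp : (Fin.cons f (Fin.append (fun i => if i ∈ insert j t0 then b i else a i)
            (fun i => if i ∈ insert j t0 then a i else b i)) : Fin (k+k+1) → Fin n)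
          = (Fin.cons f (Fin.append (fun i => if i ∈ t0 then b i else a i)
            (fun i => if i ∈ t0 then a i else b i)) : Fin (k+k+1) → Fin n)
            ∘ Equiv.swap (Fin.succ (Fin.castAdd k j)) (Fin.succ (Fin.natAdd k j)) := by
        funext l
        simp only [Function.comp_apply]
        induction l using Fin.cases with
        | zero =>
            rw [Equiv.swap_apply_of_ne_of_ne (Fin.succ_ne_zero _).symm (Fin.succ_ne_zero _).symm]
            simp
        | succ l0 =>
            induction l0 using Fin.addCases with
            | left i =>
                by_cases hij : i = j
                · subst hij
                  rw [Equiv.swap_apply_left, Fin.cons_succ, Fin.cons_succ,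
                    Fin.append_left, Fin.append_right]
                  simp [hj]
                · have hvij : (i:ℕ) ≠ (j:ℕ) := fun h => hij (Fin.ext h)
                  have h1 : (Fin.succ (Fin.castAdd k i) : Fin (k+k+1)) ≠ Fin.succ (Fin.castAdd k j) := by
                    apply Fin.ne_of_val_ne
                    simp only [Fin.val_succ, Fin.coe_castAdd]
                    omega
                  have h2 : (Fin.succ (Fin.castAdd k i) : Fin (k+k+1)) ≠ Fin.succ (Fin.natAdd k j) := by
                    have : (i:ℕ) < k := i.isLt
                    apply Fin.ne_of_val_ne
                    simp only [Fin.val_succ, Fin.coe_castAdd, Fin.coe_natAdd]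
                    omega
                  rw [Equiv.swap_apply_of_ne_of_ne h1 h2, Fin.cons_succ, Fin.cons_succ,
                    Fin.append_left, Fin.append_left]
                  simp [Finset.mem_insert, hij]
            | right i =>
                by_cases hij : i = j
                · subst hij
                  rw [Equiv.swap_apply_right, Fin.cons_succ, Fin.cons_succ,
                    Fin.append_right, Fin.append_left]
                  simp [hj]
                · have hvij : (i:ℕ) ≠ (j:ℕ) := fun h => hij (Fin.ext h)
                  have h1 : (Fin.succ (Fin.natAdd k i) : Fin (k+k+1)) ≠ Fin.succ (Fin.castAdd k j) := by
                    have : (j:ℕ) < k := j.isLt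
                    apply Fin.ne_of_val_ne
                    simp only [Fin.val_succ, Fin.coe_castAdd, Fin.coe_natAdd]
                    omega
                  have h2 : (Fin.succ (Fin.natAdd k i) : Fin (k+k+1)) ≠ Fin.succ (Fin.natAdd k j) := by
                    apply Fin.ne_of_val_ne
                    simp only [Fin.val_succ, Fin.coe_natAdd]
                    omega
                  rw [Equiv.swap_apply_of_ne_of_ne h1 h2, Fin.cons_succ, Fin.cons_succ,
                    Fin.append_right, Fin.append_right]
                  simp [Finset.mem_insert, hij]
      rw [hcomp, gdelta_colswap _ _ _ _ hne, ih, Finset.card_insert_of_notMem hj]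
      ring

lemma claimA {n k : ℕ} (R : Fin (k+k+1) → Fin n) (f : Fin n) (a b : Fin k → Fin n) :
    ∑ cc : Fin k → Fin n, ∑ d : Fin k → Fin n,
      gdelta R (Fin.cons f (Fin.append cc d)) *
        ∏ i : Fin k, (kron (cc i) (a i) * kron (d i) (b i) - kron (cc i) (b i) * kron (d i) (a i))
      = 2^k * gdelta R (Fin.cons f (Fin.append a b)) := by
  classical
  have hsplit : ∀ (t : Finset (Fin k)) (cc d : Fin k → Fin n),
      (∏ i ∈ t, (kron (cc i) (b i) * kron (d i) (a i))) *
        ∏ i ∈ Finset.univ \ t, (kron (cc i) (a i) * kron (d i) (b i))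
      = (∏ i : Fin k, kron (cc i) (if i ∈ t then b i else a i)) *
        ∏ i : Fin k, kron (d i) (if i ∈ t then a i else b i) := by
    intro t cc d
    rw [← Finset.prod_sdiff (Finset.subset_univ t)
        (f := fun i => kron (cc i) (if i ∈ t then b i else a i)),
      ← Finset.prod_sdiff (Finset.subset_univ t)
        (f := fun i => kron (d i) (if i ∈ t then a i else b i))]
    rw [Finset.prod_congr rfl (fun i hi => by rw [if_pos hi] :
        ∀ i ∈ t, kron (cc i) (if i ∈ t then b i else a i) = kron (cc i) (b i)),
      Finset.prod_congr rfl (fun i hi => by rw [if_pos hi] :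
        ∀ i ∈ t, kron (d i) (if i ∈ t then a i else b i) = kron (d i) (a i)),
      Finset.prod_congr rfl (fun i hi => by rw [if_neg (Finset.mem_sdiff.mp hi).2] :
        ∀ i ∈ Finset.univ \ t, kron (cc i) (if i ∈ t then b i else a i) = kron (cc i) (a i)),
      Finset.prod_congr rfl (fun i hi => by rw [if_neg (Finset.mem_sdiff.mp hi).2] :
        ∀ i ∈ Finset.univ \ t, kron (d i) (if i ∈ t then a i else b i) = kron (d i) (b i)),
      Finset.prod_mul_distrib, Finset.prod_mul_distrib]
    ring
  have hprod : ∀ cc d : Fin k → Fin n,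
      (∏ i : Fin k, (kron (cc i) (a i) * kron (d i) (b i) - kron (cc i) (b i) * kron (d i) (a i)))
      = ∑ t ∈ (Finset.univ : Finset (Fin k)).powerset, (-1:ℝ)^t.card *
          ((∏ i : Fin k, kron (cc i) (if i ∈ t then b i else a i)) *
           ∏ i : Fin k, kron (d i) (if i ∈ t then a i else b i)) := by
    intro cc d
    have h1 : ∀ i : Fin k,
        kron (cc i) (a i) * kron (d i) (b i) - kron (cc i) (b i) * kron (d i) (a i)
        = (-(kron (cc i) (b i) * kron (d i) (a i))) + kron (cc i) (a i) * kron (d i) (b i) := by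
      intro i; ring
    rw [Finset.prod_congr rfl fun i _ => h1 i, Finset.prod_add]
    refine Finset.sum_congr rfl fun t _ => ?_
    have h2 : (∏ i ∈ t, (-(kron (cc i) (b i) * kron (d i) (a i))))
        = (-1:ℝ)^t.card * ∏ i ∈ t, (kron (cc i) (b i) * kron (d i) (a i)) := by
      rw [Finset.prod_congr rfl (fun i _ => neg_eq_neg_one_mul _ :
          ∀ i ∈ t, -(kron (cc i) (b i) * kron (d i) (a i))
            = (-1) * (kron (cc i) (b i) * kron (d i) (a i))),
        Finset.prod_mul_distrib, Finset.prod_const]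
    rw [h2, mul_assoc, hsplit t cc d]
  calc ∑ cc : Fin k → Fin n, ∑ d : Fin k → Fin n,
      gdelta R (Fin.cons f (Fin.append cc d)) *
        ∏ i : Fin k, (kron (cc i) (a i) * kron (d i) (b i) - kron (cc i) (b i) * kron (d i) (a i))
      = ∑ cc : Fin k → Fin n, ∑ d : Fin k → Fin n,
          ∑ t ∈ (Finset.univ : Finset (Fin k)).powerset,
            gdelta R (Fin.cons f (Fin.append cc d)) * ((-1:ℝ)^t.card *
              ((∏ i : Fin k, kron (cc i) (if i ∈ t then b i else a i)) *
               ∏ i : Fin k, kron (d i) (if i ∈ t then a i else b i))) := by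
        refine Finset.sum_congr rfl fun cc _ => Finset.sum_congr rfl fun d _ => ?_
        rw [hprod cc d, Finset.mul_sum]
    _ = ∑ t ∈ (Finset.univ : Finset (Fin k)).powerset,
          ∑ cc : Fin k → Fin n, ∑ d : Fin k → Fin n,
            gdelta R (Fin.cons f (Fin.append cc d)) * ((-1:ℝ)^t.card *
              ((∏ i : Fin k, kron (cc i) (if i ∈ t then b i else a i)) *
               ∏ i : Fin k, kron (d i) (if i ∈ t then a i else b i))) := by
        rw [Finset.sum_congr rfl fun cc _ => Finset.sum_comm, Finset.sum_comm]
    _ = ∑ t ∈ (Finset.univ : Finset (Fin k)).powerset,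
          gdelta R (Fin.cons f (Fin.append a b)) := by
        refine Finset.sum_congr rfl fun t _ => ?_
        have hd : ∀ cc : Fin k → Fin n,
            ∑ d : Fin k → Fin n, gdelta R (Fin.cons f (Fin.append cc d)) * ((-1:ℝ)^t.card *
              ((∏ i : Fin k, kron (cc i) (if i ∈ t then b i else a i)) *
               ∏ i : Fin k, kron (d i) (if i ∈ t then a i else b i)))
            = (∏ i : Fin k, kron (cc i) (if i ∈ t then b i else a i)) *
              ((-1:ℝ)^t.card *
                gdelta R (Fin.cons f (Fin.append cc (fun i => if i ∈ t then a i else b i)))) := by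
          intro cc
          have hre : ∀ d : Fin k → Fin n,
              gdelta R (Fin.cons f (Fin.append cc d)) * ((-1:ℝ)^t.card *
                ((∏ i : Fin k, kron (cc i) (if i ∈ t then b i else a i)) *
                 ∏ i : Fin k, kron (d i) (if i ∈ t then a i else b i)))
              = (∏ i : Fin k, kron (d i) (if i ∈ t then a i else b i)) *
                ((∏ i : Fin k, kron (cc i) (if i ∈ t then b i else a i)) *
                  ((-1:ℝ)^t.card * gdelta R (Fin.cons f (Fin.append cc d)))) := by
            intro d; ring
          rw [Finset.sum_congr rfl fun d _ => hre d,
            sum_fun_kron (fun i => if i ∈ t then a i else b i)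
              (fun d => (∏ i : Fin k, kron (cc i) (if i ∈ t then b i else a i)) *
                ((-1:ℝ)^t.card * gdelta R (Fin.cons f (Fin.append cc d))))]
        rw [Finset.sum_congr rfl fun cc _ => hd cc,
          sum_fun_kron (fun i => if i ∈ t then b i else a i)
            (fun cc => (-1:ℝ)^t.card *
              gdelta R (Fin.cons f (Fin.append cc (fun i => if i ∈ t then a i else b i)))),
          colswap R f a b t, ← mul_assoc, ← pow_add]
        rw [Even.neg_one_pow ⟨t.card, rfl⟩, one_mul]
    _ = 2^k * gdelta R (Fin.cons f (Fin.append a b)) := by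
        rw [Finset.sum_const, Finset.card_powerset, Finset.card_univ, Fintype.card_fin,
          nsmul_eq_mul]
        push_cast
        ring

lemma fact_desc (N : ℕ) : ∀ m, m ≤ N →
    N.factorial = (∏ j ∈ Finset.range m, (N - j)) * (N - m).factorial := by
  intro m
  induction m with
  | zero => simp
  | succ m ih =>
      intro h
      have hm : m ≤ N := by omega
      rw [Finset.prod_range_succ, ih hm]
      have h3 : (N - m).factorial = (N - m) * (N - (m+1)).factorial := by
        rw [show N - m = (N - (m+1)) + 1 by omega, Nat.factorial_succ]
      rw [h3]
      ring
lemma prod_cast {n : ℕ} (hn : 1 ≤ n) (m : ℕ) (hm : m ≤ n - 1) :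
    (∏ j ∈ Finset.range m, ((n:ℝ) - (j+1))) = ((∏ j ∈ Finset.range m, (n - 1 - j) : ℕ) : ℝ) := by
  rw [Nat.cast_prod]
  refine Finset.prod_congr rfl fun j hj => ?_
  have hj' : j < m := Finset.mem_range.mp hj
  have h : ((n - 1 - j : ℕ) : ℝ) = (n:ℝ) - 1 - j := by
    rw [show n - 1 - j = n - (1 + j) by omega, Nat.cast_sub (by omega)]
    push_cast
    ring
  rw [h]
  ring


lemma gdelta_two {n : ℕ} (c d a b : Fin n) :
    gdelta ![c, d] ![a, b] = kron c a * kron d b - kron c b * kron d a := by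
  rw [gdelta, Matrix.det_fin_two]
  simp [Matrix.of_apply]

lemma inner_eval {n : ℕ} (k : ℕ) (e f : Fin n) (lam : ℝ) :
    (∑ a : Fin k → Fin n, ∑ b : Fin k → Fin n, ∑ cc : Fin k → Fin n, ∑ d : Fin k → Fin n,
      gdelta (Fin.cons e (Fin.append a b)) (Fin.cons f (Fin.append cc d)) *
        ∏ i : Fin k, (lam * gdelta ![cc i, d i] ![a i, b i]))
    = lam^k * 2^k * ((∏ j ∈ Finset.range (k+k), ((n:ℝ) - (j+1))) * kron e f) := by
  have h1 : ∀ a b cc d : Fin k → Fin n,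
      (∏ i : Fin k, (lam * gdelta ![cc i, d i] ![a i, b i]))
      = lam^k * ∏ i : Fin k,
          (kron (cc i) (a i) * kron (d i) (b i) - kron (cc i) (b i) * kron (d i) (a i)) := by
    intro a b cc d
    rw [Finset.prod_mul_distrib, Finset.prod_const, Finset.card_univ, Fintype.card_fin]
    congr 1
    exact Finset.prod_congr rfl fun i _ => gdelta_two (cc i) (d i) (a i) (b i)
  calc (∑ a : Fin k → Fin n, ∑ b : Fin k → Fin n, ∑ cc : Fin k → Fin n, ∑ d : Fin k → Fin n,
      gdelta (Fin.cons e (Fin.append a b)) (Fin.cons f (Fin.append cc d)) *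
        ∏ i : Fin k, (lam * gdelta ![cc i, d i] ![a i, b i]))
      = ∑ a : Fin k → Fin n, ∑ b : Fin k → Fin n,
          lam^k * (2^k * gdelta (Fin.cons e (Fin.append a b)) (Fin.cons f (Fin.append a b))) := by
        refine Finset.sum_congr rfl fun a _ => Finset.sum_congr rfl fun b _ => ?_
        have h2 : (∑ cc : Fin k → Fin n, ∑ d : Fin k → Fin n,
            gdelta (Fin.cons e (Fin.append a b)) (Fin.cons f (Fin.append cc d)) *
              ∏ i : Fin k, (lam * gdelta ![cc i, d i] ![a i, b i]))
            = lam^k * ∑ cc : Fin k → Fin n, ∑ d : Fin k → Fin n,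
                gdelta (Fin.cons e (Fin.append a b)) (Fin.cons f (Fin.append cc d)) *
                  ∏ i : Fin k, (kron (cc i) (a i) * kron (d i) (b i)
                    - kron (cc i) (b i) * kron (d i) (a i)) := by
          rw [Finset.mul_sum]
          refine Finset.sum_congr rfl fun cc _ => ?_
          rw [Finset.mul_sum]
          refine Finset.sum_congr rfl fun d _ => ?_
          rw [h1 a b cc d]
          ring
        rw [h2, claimA (Fin.cons e (Fin.append a b)) f a b]
    _ = lam^k * 2^k * ∑ p : (Fin k → Fin n) × (Fin k → Fin n),
          gdelta (Fin.cons e (Fin.append p.1 p.2)) (Fin.cons f (Fin.append p.1 p.2)) := by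
        rw [Fintype.sum_prod_type, Finset.mul_sum]
        refine Finset.sum_congr rfl fun a _ => ?_
        rw [Finset.mul_sum]
        refine Finset.sum_congr rfl fun b _ => ?_
        ring
    _ = lam^k * 2^k * ∑ v : Fin (k+k) → Fin n, gdelta (Fin.cons e v) (Fin.cons f v) := by
        congr 1
        exact Fintype.sum_equiv (Fin.appendEquiv k k) _ _ (fun p => rfl)
    _ = lam^k * 2^k * ((∏ j ∈ Finset.range (k+k), ((n:ℝ) - (j+1))) * kron e f) := by
        rw [sum_diag_gdelta e f (k+k)]


/-- For a maximally symmetric algebraic curvature `R^{ab}_{cd} = λ̄ δ^{ab}_{cd}` in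
`n` dimensions, the Lovelock field tensor `G^a_c = Σ_k c_k G^{a(k)}_c` equals
`-((n-1)!/2) P(λ̄) δ^a_c`, where `P(λ) = Σ_k c_k λ^k/(n-2k-1)!`. -/
theorem lovelock_max_sym (n : ℕ) (c : ℕ → ℝ) (lam : ℝ) (e f : Fin n) :
    ∑ k ∈ Finset.range ((n - 1) / 2 + 1),
      c k *
        (-(1 / 2 ^ (k + 1) : ℝ) *
          ∑ a : Fin k → Fin n, ∑ b : Fin k → Fin n,
          ∑ cc : Fin k → Fin n, ∑ d : Fin k → Fin n,
            gdelta (Fin.cons e (Fin.append a b)) (Fin.cons f (Fin.append cc d)) *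
              ∏ i : Fin k, (lam * gdelta ![cc i, d i] ![a i, b i]))
      = -((Nat.factorial (n - 1) : ℝ) / 2) *
          (∑ k ∈ Finset.range ((n - 1) / 2 + 1),
            c k * lam ^ k / (Nat.factorial (n - 2 * k - 1) : ℝ)) * kron e f := by

  rcases Nat.eq_zero_or_pos n with hn | hn
  · subst hn
    exact e.elim0
  have hmain : ∀ k ∈ Finset.range ((n - 1) / 2 + 1),
      c k *
        (-(1 / 2 ^ (k + 1) : ℝ) *
          ∑ a : Fin k → Fin n, ∑ b : Fin k → Fin n,
          ∑ cc : Fin k → Fin n, ∑ d : Fin k → Fin n,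
            gdelta (Fin.cons e (Fin.append a b)) (Fin.cons f (Fin.append cc d)) *
              ∏ i : Fin k, (lam * gdelta ![cc i, d i] ![a i, b i]))
      = -((Nat.factorial (n - 1) : ℝ) / 2) *
          (c k * lam ^ k / (Nat.factorial (n - 2 * k - 1) : ℝ)) * kron e f := by
    intro k hk
    have hk2 : k + k ≤ n - 1 := by
      have := Finset.mem_range.mp hk
      omega
    have hfact : ((n-1).factorial : ℝ)
        = ((∏ j ∈ Finset.range (k+k), (n - 1 - j) : ℕ) : ℝ)
          * ((n - 2*k - 1).factorial : ℝ) := by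
      have h := fact_desc (n-1) (k+k) hk2
      rw [show n - 1 - (k+k) = n - 2*k - 1 by omega] at h
      exact_mod_cast h
    rw [inner_eval, prod_cast hn (k+k) hk2, hfact]
    have hG : ((n - 2*k - 1).factorial : ℝ) ≠ 0 :=
      Nat.cast_ne_zero.mpr (Nat.factorial_ne_zero _)
    have h2 : (2:ℝ) ^ (k+1) ≠ 0 := by positivity
    field_simp
    ring
  rw [Finset.sum_congr rfl hmain, ← Finset.sum_mul, ← Finset.mul_sum]
end

section
/- Let H⁽⁰⁾(x₃,x₄) = (a/6)(2a+b)x₃⁴ + (b/6)(a+2b)x₄⁴ + 2(c − ab k)x₃² − 2(c + ab k)x₄², where a, b, c, k are real constants. Then the flat Laplacian in the variables (x₂, x₃, x₄) applied to H⁽⁰⁾ equals 2a(2a+b)x₃² + 2b(a+2b)x₄² + 4(c−abk) − 4(c+abk), i.e. Δ H⁽⁰⁾ = 2a(2a+b)x₃² + 2b(a+2b)x₄² − 8abk. In particular, with k = c₂/c₁ and together with W_α = (a x₃² + b x₄²)δ_{α,2}, H⁽¹⁾ = (a+b)x₂, the pair of field equations (5.6)–(5.7): H⁽¹⁾_{,α}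 = W_{[α,β]}{}^{,β} and c₁(ΔH⁽⁰⁾ − H⁽¹⁾W^α_{,α} − 2W^α H⁽¹⁾_{,α} − W^{[α,β]}W_{[α,β]}) = 2c₂(−2W_{[α,β]}{}^{,α}W^{[γ,β]}{}_{,γ} + W_{[α,β],γ}W^{[α,β],γ}) are satisfied identically on ℝ³ (coordinates x₂, x₃, x₄, flat Euclidean metric, u-dependence of a,b,c frozen). -/
/-- Partial derivative in the `i`-th coordinate of a function on flat `ℝ³`
(coordinates `x₂, x₃, x₄`, indexed by `Fin 3` as `0 ↔ x₂`, `1 ↔ x₃`, `2 ↔ x₄`). -/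
noncomputable def pd (i : Fin 3) (f : (Fin 3 → ℝ) → ℝ) : (Fin 3 → ℝ) → ℝ :=
  fun x => deriv (fun t => f (Function.update x i t)) (x i)

/-- `W_α = (a x₃² + b x₄²) δ_{α,2}`, i.e. `W₂ = a x₃² + b x₄²`, `W₃ = W₄ = 0`. -/
noncomputable def Wvec (a b : ℝ) (α : Fin 3) : (Fin 3 → ℝ) → ℝ :=
  fun x => if α = 0 then a * (x 1) ^ 2 + b * (x 2) ^ 2 else 0

/-- `W_{[α,β]} = ½ (∂_β W_α − ∂_α W_β)`. -/
noncomputable def Wab (a b : ℝ) (α β : Fin 3) : (Fin 3 → ℝ) → ℝ :=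
  fun x => (pd β (Wvec a b α) x - pd α (Wvec a b β) x) / 2

/-- `H⁽⁰⁾ = (a/6)(2a+b)x₃⁴ + (b/6)(a+2b)x₄⁴ + 2(c − abk)x₃² − 2(c + abk)x₄²`. -/
noncomputable def H0 (a b c k : ℝ) : (Fin 3 → ℝ) → ℝ :=
  fun x => a / 6 * (2 * a + b) * (x 1) ^ 4 + b / 6 * (a + 2 * b) * (x 2) ^ 4
    + 2 * (c - a * b * k) * (x 1) ^ 2 - 2 * (c + a * b * k) * (x 2) ^ 2

/-- `H⁽¹⁾ = (a+b) x₂`. -/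
noncomputable def H1 (a b : ℝ) : (Fin 3 → ℝ) → ℝ := fun x => (a + b) * x 0

/- ### Auxiliary derivative machinery -/

lemma dpoly (A B C D E s : ℝ) :
    deriv (fun t : ℝ => A * t ^ 4 + B * t ^ 3 + C * t ^ 2 + D * t + E) s
      = 4 * A * s ^ 3 + 3 * B * s ^ 2 + 2 * C * s + D := by
  have h : HasDerivAt (fun t : ℝ => A * t ^ 4 + B * t ^ 3 + C * t ^ 2 + D * t + E)
      (A * (↑4 * s ^ (4-1)) + B * (↑3 * s ^ (3-1)) + C * (↑2 * s ^ (2-1)) + D * 1 + 0) s :=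
    (((((hasDerivAt_pow 4 s).const_mul A).add ((hasDerivAt_pow 3 s).const_mul B)).add
      ((hasDerivAt_pow 2 s).const_mul C)).add ((hasDerivAt_id s).const_mul D)).add
      (hasDerivAt_const s E)
  rw [h.deriv]; push_cast; ring

lemma pd_eq {i : Fin 3} {f : (Fin 3 → ℝ) → ℝ} {x : Fin 3 → ℝ} {v : ℝ} (A B C D E : ℝ)
    (hfun : (fun t => f (Function.update x i t))
      = fun t : ℝ => A * t ^ 4 + B * t ^ 3 + C * t ^ 2 + D * t + E)
    (hval : 4 * A * (x i) ^ 3 + 3 * B * (x i) ^ 2 + 2 * C * (x i) + D = v) :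
    pd i f x = v := by
  show deriv (fun t => f (Function.update x i t)) (x i) = v
  rw [hfun, dpoly, hval]

section
variable (a b c k : ℝ)

lemma pdH0_0 : pd 0 (H0 a b c k) = fun _ => 0 := by
  funext x
  exact pd_eq 0 0 0 0 (H0 a b c k x)
    (by funext t; simp [H0, Function.update]) (by ring)

lemma pdH0_1 : pd 1 (H0 a b c k)
    = fun x => 2/3 * a * (2*a+b) * (x 1)^3 + 4*(c - a*b*k) * (x 1) := by
  funext x
  exact pd_eq (a/6*(2*a+b)) 0 (2*(c-a*b*k)) 0
    (b/6*(a+2*b)*(x 2)^4 - 2*(c+a*b*k)*(x 2)^2)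
    (by funext t; simp [H0, Function.update]; ring) (by ring)

lemma pdH0_2 : pd 2 (H0 a b c k)
    = fun x => 2/3 * b * (a+2*b) * (x 2)^3 - 4*(c + a*b*k) * (x 2) := by
  funext x
  exact pd_eq (b/6*(a+2*b)) 0 (-(2*(c+a*b*k))) 0
    (a/6*(2*a+b)*(x 1)^4 + 2*(c-a*b*k)*(x 1)^2)
    (by funext t; simp [H0, Function.update]; ring) (by ring)

lemma pd_const (i : Fin 3) (C : ℝ) : pd i (fun _ => C) = fun _ => 0 := by
  funext x
  exact pd_eq 0 0 0 0 C (by funext t; ring) (by ring)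

lemma pd_lin_same (i : Fin 3) (A : ℝ) : pd i (fun x => A * x i) = fun _ => A := by
  funext x
  exact pd_eq 0 0 0 A 0 (by funext t; simp [Function.update]) (by ring)

lemma pd_lin_ne (i j : Fin 3) (h : j ≠ i) (A : ℝ) :
    pd i (fun x => A * x j) = fun _ => 0 := by
  funext x
  exact pd_eq 0 0 0 0 (A * x j)
    (by funext t; rw [Function.update_of_ne h]; ring) (by ring)

lemma pdd_H0_1 : pd 1 (pd 1 (H0 a b c k))
    = fun x => 2*a*(2*a+b)*(x 1)^2 + 4*(c - a*b*k) := by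
  rw [pdH0_1]
  funext x
  exact pd_eq 0 (2/3*a*(2*a+b)) 0 (4*(c-a*b*k)) 0
    (by funext t; simp [Function.update]) (by ring)

lemma pdd_H0_2 : pd 2 (pd 2 (H0 a b c k))
    = fun x => 2*b*(a+2*b)*(x 2)^2 - 4*(c + a*b*k) := by
  rw [pdH0_2]
  funext x
  exact pd_eq 0 (2/3*b*(a+2*b)) 0 (-(4*(c+a*b*k))) 0
    (by funext t; simp [Function.update]; ring) (by ring)

lemma pdd_H0_0 : pd 0 (pd 0 (H0 a b c k)) = fun _ => 0 := by
  rw [pdH0_0, pd_const]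

lemma Wvec0 : Wvec a b 0 = fun x => a * (x 1)^2 + b * (x 2)^2 := by
  funext x; simp [Wvec]

lemma Wvec1 : Wvec a b 1 = fun _ => 0 := by funext x; simp [Wvec]
lemma Wvec2 : Wvec a b 2 = fun _ => 0 := by funext x; simp [Wvec]

lemma pdWvec0_0 : pd 0 (Wvec a b 0) = fun _ => 0 := by
  funext x
  exact pd_eq 0 0 0 0 (a * (x 1)^2 + b * (x 2)^2)
    (by funext t; simp [Wvec, Function.update]) (by ring)

lemma pdWvec0_1 : pd 1 (Wvec a b 0) = fun x => 2 * a * x 1 := by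
  funext x
  exact pd_eq 0 0 a 0 (b * (x 2)^2)
    (by funext t; simp [Wvec, Function.update]) (by ring)

lemma pdWvec0_2 : pd 2 (Wvec a b 0) = fun x => 2 * b * x 2 := by
  funext x
  exact pd_eq 0 0 b 0 (a * (x 1)^2)
    (by funext t; simp [Wvec, Function.update]; ring) (by ring)

lemma Wab00 : Wab a b 0 0 = fun _ => 0 := by funext x; simp [Wab]

lemma Wab01 : Wab a b 0 1 = fun x => a * x 1 := by
  funext x
  show (pd 1 (Wvec a b 0) x - pd 0 (Wvec a b 1) x) / 2 = _
  rw [pdWvec0_1, Wvec1, pd_const]; ring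

lemma Wab02 : Wab a b 0 2 = fun x => b * x 2 := by
  funext x
  show (pd 2 (Wvec a b 0) x - pd 0 (Wvec a b 2) x) / 2 = _
  rw [pdWvec0_2, Wvec2, pd_const]; ring

lemma Wab10 : Wab a b 1 0 = fun x => -a * x 1 := by
  funext x
  show (pd 0 (Wvec a b 1) x - pd 1 (Wvec a b 0) x) / 2 = _
  rw [pdWvec0_1, Wvec1, pd_const]; ring

lemma Wab20 : Wab a b 2 0 = fun x => -b * x 2 := by
  funext x
  show (pd 0 (Wvec a b 2) x - pd 2 (Wvec a b 0) x) / 2 = _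
  rw [pdWvec0_2, Wvec2, pd_const]; ring

lemma Wab11 : Wab a b 1 1 = fun _ => 0 := by funext x; simp [Wab]

lemma Wab12 : Wab a b 1 2 = fun _ => 0 := by
  funext x
  show (pd 2 (Wvec a b 1) x - pd 1 (Wvec a b 2) x) / 2 = _
  rw [Wvec1, Wvec2, pd_const, pd_const]; ring

lemma Wab21 : Wab a b 2 1 = fun _ => 0 := by
  funext x
  show (pd 1 (Wvec a b 2) x - pd 2 (Wvec a b 1) x) / 2 = _
  rw [Wvec1, Wvec2, pd_const, pd_const]; ring

lemma Wab22 : Wab a b 2 2 = fun _ => 0 := by funext x; simp [Wab]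

lemma pdH1_0 : pd 0 (H1 a b) = fun _ => a + b := pd_lin_same 0 (a + b)
lemma pdH1_1 : pd 1 (H1 a b) = fun _ => 0 := pd_lin_ne 1 0 (by decide) (a + b)
lemma pdH1_2 : pd 2 (H1 a b) = fun _ => 0 := pd_lin_ne 2 0 (by decide) (a + b)

end

/-- Verification of the explicit VSI Lovelock solution (5.8)–(5.9): the flat
Laplacian of `H⁽⁰⁾` equals `2a(2a+b)x₃² + 2b(a+2b)x₄² − 8abk`, and with
`k = c₂/c₁` the field equations (5.6)–(5.7), namely
`H⁽¹⁾_{,α} = W_{[α,β]}{}^{,β}` and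
`c₁(ΔH⁽⁰⁾ − H⁽¹⁾ W^α_{,α} − 2W^α H⁽¹⁾_{,α} − W^{[α,β]} W_{[α,β]})
  = 2c₂(−2W_{[α,β]}{}^{,α} W^{[γ,β]}{}_{,γ} + W_{[α,β],γ} W^{[α,β],γ})`,
hold identically on `ℝ³`. -/
theorem vsi_solution_check (a b c c₁ c₂ : ℝ) (hc₁ : c₁ ≠ 0) :
    (∀ x : Fin 3 → ℝ,
      ∑ i : Fin 3, pd i (pd i (H0 a b c (c₂ / c₁))) x
        = 2 * a * (2 * a + b) * (x 1) ^ 2 + 2 * b * (a + 2 * b) * (x 2) ^ 2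
          - 8 * a * b * (c₂ / c₁)) ∧
    (∀ α : Fin 3, ∀ x : Fin 3 → ℝ,
      pd α (H1 a b) x = ∑ β : Fin 3, pd β (Wab a b α β) x) ∧
    (∀ x : Fin 3 → ℝ,
      c₁ * ((∑ i : Fin 3, pd i (pd i (H0 a b c (c₂ / c₁))) x)
          - H1 a b x * (∑ α : Fin 3, pd α (Wvec a b α) x)
          - 2 * (∑ α : Fin 3, Wvec a b α x * pd α (H1 a b) x)
          - (∑ α : Fin 3, ∑ β : Fin 3, Wab a b α β x * Wab a b α β x))
        = 2 * c₂ *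
          (-2 * (∑ β : Fin 3,
              (∑ α : Fin 3, pd α (Wab a b α β) x) *
                (∑ γ : Fin 3, pd γ (Wab a b γ β) x))
            + (∑ α : Fin 3, ∑ β : Fin 3, ∑ γ : Fin 3,
                pd γ (Wab a b α β) x * pd γ (Wab a b α β) x))) := by
  set k := c₂ / c₁ with hk
  have lap : ∀ x : Fin 3 → ℝ,
      ∑ i : Fin 3, pd i (pd i (H0 a b c k)) x
        = 2 * a * (2 * a + b) * (x 1) ^ 2 + 2 * b * (a + 2 * b) * (x 2) ^ 2
          - 8 * a * b * k := by
    intro x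
    rw [Fin.sum_univ_three, pdd_H0_0, pdd_H0_1, pdd_H0_2]
    ring
  refine ⟨lap, ?_, ?_⟩
  · intro α x
    fin_cases α
    · show pd 0 (H1 a b) x = ∑ β : Fin 3, pd β (Wab a b 0 β) x
      rw [Fin.sum_univ_three, pdH1_0, Wab00, Wab01, Wab02, pd_const,
        pd_lin_same 1 a, pd_lin_same 2 b]
      ring
    · show pd 1 (H1 a b) x = ∑ β : Fin 3, pd β (Wab a b 1 β) x
      rw [Fin.sum_univ_three, pdH1_1, Wab10, Wab11, Wab12, pd_const, pd_const,
        pd_lin_ne 0 1 (by decide)]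
      ring
    · show pd 2 (H1 a b) x = ∑ β : Fin 3, pd β (Wab a b 2 β) x
      rw [Fin.sum_univ_three, pdH1_2, Wab20, Wab21, Wab22, pd_const, pd_const,
        pd_lin_ne 0 2 (by decide)]
      ring
  · intro x
    rw [lap x]
    simp only [Fin.sum_univ_three]
    rw [pdWvec0_0, Wvec0, Wvec1, Wvec2, pd_const, pd_const,
      pdH1_0, pdH1_1, pdH1_2,
      Wab00, Wab01, Wab02, Wab10, Wab11, Wab12, Wab20, Wab21, Wab22]
    simp only [pd_const, pd_lin_same, pd_lin_ne 0 1 (by decide), pd_lin_ne 2 1 (by decide),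
      pd_lin_ne 0 2 (by decide), pd_lin_ne 1 2 (by decide)]
    rw [hk]
    field_simp
    ring
end
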